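/- Let μ be a Bloch weight satisfying: there exists B > 0 with μ(1 - d/2) ≥ B μ(1-d) for all d ∈ (0,1); and suppose that for each q > 1 there exist A > 1 and y_0 ≥ 1 such that whenever x > q y and y > y_0 one has μ(1 - 1/y) > A μ(1 - 1/x). Let f(z) = ∑_k a_{n_k} z^{n_k} be a holomorphic function on the open unit disk whose exponents form a Hadamard gap sequence with ratio λ > 1, and suppose sup_k n_k |a_{n_k}| μ(1 - 1/n_k) < ∞. Then sup_{z ∈ 𝔻} μ(|z|) |f'(z)| < ∞. -/

import Mathlib

/-!
With `N = 1/(1 - r)`, the coefficient bound reduces `μ(r) |f'(z)|`, `|z| = r`, to `C` times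
`∑ₖ μ(r)/μ(1 - 1/nₖ) · r^(nₖ-1)`, and this sum is bounded uniformly in `r` by splitting it at
`nₖ ≈ N`. For `y₀ < nₖ ≤ N` the growth condition, iterated along the gap sequence, makes the
ratio `μ(r)/μ(1 - 1/nₖ)` decay geometrically in the distance from the last such index, and there
are at most `y₀ + 1` indices with `nₖ ≤ y₀`. For `nₖ > N` iterated doubling gives the polynomial
bound `μ(r)/μ(1 - 1/nₖ) ≤ (2 nₖ (1 - r))^p`, which the factor `r^(nₖ-1) ≤ e · exp(-nₖ(1 - r))`
turns into `O(1/(nₖ(1 - r)))`, again a geometric series by the gap condition. The same bounds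
make the differentiated series converge, so `f'` may be computed termwise.
-/

open Set Finset Real Nat

lemma sum_pow_le_of_injOn {σ : ℝ} (h0 : 0 ≤ σ) (h1 : σ < 1) {S : Finset ℕ} {g : ℕ → ℕ}
    (hg : Set.InjOn g S) : ∑ k ∈ S, σ ^ g k ≤ (1 - σ)⁻¹ := by
  rw [← Finset.sum_image hg, ← tsum_geometric_of_lt_one h0 h1]
  exact (summable_geometric_of_lt_one h0 h1).sum_le_tsum _ fun i _ => pow_nonneg h0 i

lemma pow_mul_exp_neg_le (p : ℕ) {x : ℝ} (hx : 0 < x) :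
    x ^ p * exp (-x) ≤ (p + 1)! / x := by
  have h := Real.pow_div_factorial_le_exp _ hx.le (p + 1)
  rw [div_le_iff₀ (by positivity), pow_succ] at h
  rw [le_div_iff₀ hx, exp_neg]
  calc x ^ p * (exp x)⁻¹ * x = x ^ p * x * (exp x)⁻¹ := by ring
    _ ≤ exp x * (p + 1)! * (exp x)⁻¹ := by gcongr
    _ = (p + 1)! := by field_simp

lemma pow_pred_le_exp_one_mul_exp_neg {r : ℝ} (hr : 0 ≤ r) (n : ℕ) :
    r ^ (n - 1) ≤ exp 1 * exp (-(n * (1 - r))) := by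
  calc r ^ (n - 1) ≤ exp (r - 1) ^ (n - 1) := by
        gcongr; linarith [add_one_le_exp (r - 1)]
    _ = exp (((n - 1 : ℕ) : ℝ) * (r - 1)) := by rw [← exp_nat_mul]
    _ ≤ exp 1 * exp (-(n * (1 - r))) := by
        rw [← exp_add]
        gcongr
        rcases n with _ | n
        · simp
        · push_cast; nlinarith

lemma one_sub_one_div_mem_Ico {x : ℝ} (hx : 1 ≤ x) : 1 - 1 / x ∈ Ico (0 : ℝ) 1 := by
  have : 0 < 1 / x := by positivity
  have : 1 / x ≤ 1 := by rw [div_le_one (by linarith)]; exact hx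
  constructor <;> linarith

section Lacunary

variable {n : ℕ → ℕ} {lam : ℝ}

lemma strictMono_of_gap (hlam : 1 < lam) (hn : ∀ k, 0 < n k)
    (hgap : ∀ k, lam * n k ≤ n (k + 1)) : StrictMono n := by
  refine strictMono_nat_of_lt_succ fun k => ?_
  have : (0 : ℝ) < n k := by exact_mod_cast hn k
  exact_mod_cast (lt_mul_of_one_lt_left this hlam).trans_le (hgap k)

lemma pow_mul_le_of_gap (hlam : 0 ≤ lam) (hgap : ∀ k, lam * n k ≤ n (k + 1)) (k : ℕ) :
    ∀ j, lam ^ j * n k ≤ n (k + j)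
  | 0 => by simp
  | j + 1 => by
    calc lam ^ (j + 1) * n k = lam * (lam ^ j * n k) := by ring
      _ ≤ lam * n (k + j) := by gcongr; exact pow_mul_le_of_gap hlam hgap k j
      _ ≤ n (k + (j + 1)) := hgap (k + j)

lemma sum_div_le_of_gap (hlam : 1 < lam) (hn : ∀ k, 0 < n k)
    (hgap : ∀ k, lam * n k ≤ n (k + 1)) {N : ℝ} (S : Finset ℕ)
    (hS : ∀ k ∈ S, N < n k) : ∑ k ∈ S, N / n k ≤ (1 - lam⁻¹)⁻¹ := by
  have hσ : lam⁻¹ < 1 := inv_lt_one_of_one_lt₀ hlam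
  rcases S.eq_empty_or_nonempty with rfl | hne
  · simpa using (inv_pos.2 (sub_pos.2 hσ)).le
  set K := S.min' hne
  have hK : ∀ k ∈ S, K ≤ k := fun k hk => S.min'_le k hk
  calc ∑ k ∈ S, N / n k ≤ ∑ k ∈ S, lam⁻¹ ^ (k - K) := by
        refine Finset.sum_le_sum fun k hk => ?_
        have hnk : (0 : ℝ) < n k := by exact_mod_cast hn k
        have hgapK := pow_mul_le_of_gap (by linarith) hgap K (k - K)
        rw [Nat.add_sub_cancel' (hK k hk)] at hgapK
        rw [div_le_iff₀ hnk, inv_pow, inv_mul_eq_div, le_div_iff₀ (by positivity)]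
        calc N * lam ^ (k - K) ≤ n K * lam ^ (k - K) := by
              gcongr; exact (hS K (S.min'_mem hne)).le
          _ ≤ n k := by linarith
    _ ≤ (1 - lam⁻¹)⁻¹ :=
        sum_pow_le_of_injOn (by positivity) hσ fun k hk l hl h => by
          have := hK k hk; have := hK l hl; omega

end Lacunary

section Weight

variable {μ : ℝ → ℝ}

lemma weight_le_inv_pow_mul_of_doubling (hanti : AntitoneOn μ (Ico 0 1)) {B : ℝ} (hB : 0 < B)
    (hdbl : ∀ d ∈ Ioo (0 : ℝ) 1, B * μ (1 - d) ≤ μ (1 - d / 2)) {e : ℝ} (he : e ∈ Ioo (0 : ℝ) 1) :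
    ∀ (m : ℕ) (d : ℝ), d ∈ Ioo (0 : ℝ) 1 → d ≤ 2 ^ m * e → μ (1 - d) ≤ B⁻¹ ^ m * μ (1 - e)
  | 0, d, hd, hde => by
    simp only [pow_zero, one_mul] at hde ⊢
    exact hanti ⟨by linarith [he.2], by linarith [he.1]⟩ ⟨by linarith [hd.2], by linarith [hd.1]⟩
      (by linarith)
  | m + 1, d, hd, hde => by
    have hd2 : d / 2 ∈ Ioo (0 : ℝ) 1 := ⟨by linarith [hd.1], by linarith [hd.2]⟩
    have ih := weight_le_inv_pow_mul_of_doubling hanti hB hdbl he m (d / 2) hd2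
      (by rw [pow_succ] at hde; linarith)
    calc μ (1 - d) ≤ B⁻¹ * μ (1 - d / 2) := by
          rw [inv_mul_eq_div, le_div_iff₀ hB, mul_comm]; exact hdbl d hd
      _ ≤ B⁻¹ * (B⁻¹ ^ m * μ (1 - e)) := by gcongr
      _ = B⁻¹ ^ (m + 1) * μ (1 - e) := by ring

lemma weight_le_pow_mul_of_doubling (hμ : ∀ r ∈ Ico (0 : ℝ) 1, 0 ≤ μ r)
    (hanti : AntitoneOn μ (Ico 0 1)) {B : ℝ} (hB : 0 < B)
    (hdbl : ∀ d ∈ Ioo (0 : ℝ) 1, B * μ (1 - d) ≤ μ (1 - d / 2)) {p : ℕ} (hp : B⁻¹ ≤ 2 ^ p)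
    {d e : ℝ} (he : 0 < e) (hed : e ≤ d) (hd : d < 1) :
    μ (1 - d) ≤ (2 * d / e) ^ p * μ (1 - e) := by
  obtain ⟨m, hm, hm'⟩ := exists_nat_pow_near ((one_le_div he).2 hed) one_lt_two
  rw [le_div_iff₀ he] at hm
  rw [div_lt_iff₀ he] at hm'
  have he1 : e ∈ Ioo (0 : ℝ) 1 := ⟨he, hed.trans_lt hd⟩
  have hμe : 0 ≤ μ (1 - e) := hμ _ ⟨by linarith [he1.2], by linarith⟩
  calc μ (1 - d) ≤ B⁻¹ ^ (m + 1) * μ (1 - e) :=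
        weight_le_inv_pow_mul_of_doubling hanti hB hdbl he1 (m + 1) d ⟨he.trans_le hed, hd⟩ hm'.le
    _ ≤ (2 ^ (m + 1)) ^ p * μ (1 - e) := by
        rw [← pow_mul, mul_comm (m + 1) p, pow_mul]
        gcongr
    _ ≤ (2 * d / e) ^ p * μ (1 - e) := by
        gcongr
        rw [le_div_iff₀ he, pow_succ]; linarith

lemma pow_mul_weight_le_of_growth (hanti : AntitoneOn μ (Ico 0 1)) {q lam A y₀ : ℝ}
    (hq : q < lam) (hlam : 1 ≤ lam) (hA : 0 ≤ A) (hy₀ : 1 ≤ y₀)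
    (hg : ∀ x y : ℝ, y₀ < y → q * y < x → A * μ (1 - 1 / x) < μ (1 - 1 / y)) :
    ∀ (j : ℕ) (x y : ℝ), y₀ < y → lam ^ j * y ≤ x → A ^ j * μ (1 - 1 / x) ≤ μ (1 - 1 / y)
  | 0, x, y, hy, hxy => by
    simp only [pow_zero, one_mul] at hxy ⊢
    have hy1 : 1 ≤ y := by linarith
    exact hanti (one_sub_one_div_mem_Ico hy1) (one_sub_one_div_mem_Ico (hy1.trans hxy))
      (by gcongr)
  | j + 1, x, y, hy, hxy => by
    have hy0 : 0 < y := by linarith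
    have ih := pow_mul_weight_le_of_growth hanti hq hlam hA hy₀ hg j x (lam * y)
      (by nlinarith) (by rw [pow_succ] at hxy; linarith)
    calc A ^ (j + 1) * μ (1 - 1 / x) = A * (A ^ j * μ (1 - 1 / x)) := by ring
      _ ≤ A * μ (1 - 1 / (lam * y)) := by gcongr
      _ ≤ μ (1 - 1 / y) := (hg _ y hy (by nlinarith)).le

end Weight

section WeightedLacunarySum

variable {μ : ℝ → ℝ} {n : ℕ → ℕ} {r : ℝ}

lemma weight_ratio_le_one (hμ : ∀ r ∈ Ico (0 : ℝ) 1, 0 < μ r) (hanti : AntitoneOn μ (Ico 0 1))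
    (hr : r ∈ Ico (0 : ℝ) 1) {x : ℝ} (hx : 1 ≤ x) (hxr : x ≤ (1 - r)⁻¹) :
    μ r / μ (1 - 1 / x) ≤ 1 := by
  have hmem := one_sub_one_div_mem_Ico hx
  rw [div_le_one (hμ _ hmem)]
  refine hanti hmem hr ?_
  have : 1 - r ≤ 1 / x := by
    rw [le_div_iff₀ (by linarith), mul_comm, ← le_div_iff₀ (by linarith [hr.2]), one_div]
    exact hxr
  linarith

lemma sum_weight_ratio_mul_pow_le_of_le (hμ : ∀ r ∈ Ico (0 : ℝ) 1, 0 < μ r)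
    (hanti : AntitoneOn μ (Ico 0 1)) (hmono : StrictMono n) (hn : ∀ k, 0 < n k)
    (hr : r ∈ Ico (0 : ℝ) 1) {y₀ : ℝ} (S : Finset ℕ)
    (hS : ∀ k ∈ S, (n k : ℝ) ≤ y₀ ∧ (n k : ℝ) ≤ (1 - r)⁻¹) :
    ∑ k ∈ S, μ r / μ (1 - 1 / n k) * r ^ (n k - 1) ≤ ⌊y₀⌋₊ + 1 := by
  have hS' : S ⊆ Finset.range (⌊y₀⌋₊ + 1) := fun k hk => by
    rw [Finset.mem_range, Nat.lt_succ_iff]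
    exact (hmono.id_le k).trans (Nat.le_floor (hS k hk).1)
  calc ∑ k ∈ S, μ r / μ (1 - 1 / n k) * r ^ (n k - 1) ≤ ∑ k ∈ S, (1 : ℝ) := by
        refine Finset.sum_le_sum fun k hk => ?_
        have hn1 : (1 : ℝ) ≤ n k := by exact_mod_cast hn k
        exact mul_le_one₀ (weight_ratio_le_one hμ hanti hr hn1 (hS k hk).2)
          (pow_nonneg hr.1 _) (pow_le_one₀ hr.1 hr.2.le)
    _ ≤ ⌊y₀⌋₊ + 1 := by
        rw [Finset.sum_const, nsmul_one]
        exact_mod_cast (Finset.card_le_card hS').trans (Finset.card_range _).le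

lemma sum_weight_ratio_mul_pow_le_of_growth (hμ : ∀ r ∈ Ico (0 : ℝ) 1, 0 < μ r)
    (hanti : AntitoneOn μ (Ico 0 1)) {lam : ℝ} (hlam : 1 < lam)
    (hgap : ∀ k, lam * n k ≤ n (k + 1)) {q A y₀ : ℝ} (hq : q < lam) (hA : 1 < A) (hy₀ : 1 ≤ y₀)
    (hg : ∀ x y : ℝ, y₀ < y → q * y < x → A * μ (1 - 1 / x) < μ (1 - 1 / y))
    (hr : r ∈ Ico (0 : ℝ) 1) (S : Finset ℕ) (hS : ∀ k ∈ S, y₀ < n k ∧ (n k : ℝ) ≤ (1 - r)⁻¹) :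
    ∑ k ∈ S, μ r / μ (1 - 1 / n k) * r ^ (n k - 1) ≤ (1 - A⁻¹)⁻¹ := by
  have hσ : A⁻¹ < 1 := inv_lt_one_of_one_lt₀ hA
  rcases S.eq_empty_or_nonempty with rfl | hne
  · simpa using (inv_pos.2 (sub_pos.2 hσ)).le
  set K := S.max' hne
  have hK : ∀ k ∈ S, k ≤ K := fun k hk => S.le_max' k hk
  calc ∑ k ∈ S, μ r / μ (1 - 1 / n k) * r ^ (n k - 1) ≤ ∑ k ∈ S, A⁻¹ ^ (K - k) := by
        refine Finset.sum_le_sum fun k hk => ?_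
        obtain ⟨hy, -⟩ := hS k hk
        have hμk := hμ _ (one_sub_one_div_mem_Ico (hy₀.trans hy.le))
        have hgapK := pow_mul_le_of_gap (by linarith) hgap k (K - k)
        rw [Nat.add_sub_cancel' (hK k hk)] at hgapK
        have hchain := pow_mul_weight_le_of_growth hanti hq hlam.le (by linarith) hy₀ hg (K - k)
          _ _ hy (hgapK.trans (hS K (S.max'_mem hne)).2)
        rw [one_div, inv_inv, sub_sub_cancel] at hchain
        calc μ r / μ (1 - 1 / n k) * r ^ (n k - 1) ≤ μ r / μ (1 - 1 / n k) :=
              mul_le_of_le_one_right (div_nonneg (hμ r hr).le hμk.le) (pow_le_one₀ hr.1 hr.2.le)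
          _ ≤ A⁻¹ ^ (K - k) := by
              rw [div_le_iff₀ hμk, inv_pow, inv_mul_eq_div, le_div_iff₀ (by positivity), mul_comm]
              exact hchain
    _ ≤ (1 - A⁻¹)⁻¹ :=
        sum_pow_le_of_injOn (by positivity) hσ fun k hk l hl h => by
          have := hK k hk; have := hK l hl; omega

lemma sum_weight_ratio_mul_pow_le_of_doubling (hμ : ∀ r ∈ Ico (0 : ℝ) 1, 0 < μ r)
    (hanti : AntitoneOn μ (Ico 0 1)) {B : ℝ} (hB : 0 < B)
    (hdbl : ∀ d ∈ Ioo (0 : ℝ) 1, B * μ (1 - d) ≤ μ (1 - d / 2)) {p : ℕ} (hp : B⁻¹ ≤ 2 ^ p)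
    {lam : ℝ} (hlam : 1 < lam) (hn : ∀ k, 0 < n k) (hgap : ∀ k, lam * n k ≤ n (k + 1))
    (hr : r ∈ Ioo (0 : ℝ) 1) (S : Finset ℕ) (hS : ∀ k ∈ S, (1 - r)⁻¹ < n k) :
    ∑ k ∈ S, μ r / μ (1 - 1 / n k) * r ^ (n k - 1) ≤
      2 ^ p * exp 1 * (p + 1)! * (1 - lam⁻¹)⁻¹ := by
  have h1r : 0 < 1 - r := by linarith [hr.2]
  calc ∑ k ∈ S, μ r / μ (1 - 1 / n k) * r ^ (n k - 1)
      ≤ ∑ k ∈ S, 2 ^ p * exp 1 * (p + 1)! * ((1 - r)⁻¹ / n k) := by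
        refine Finset.sum_le_sum fun k hk => ?_
        have hnk : (0 : ℝ) < n k := by exact_mod_cast hn k
        have hek : 1 / (n k : ℝ) ≤ 1 - r := by
          rw [div_le_iff₀ hnk, ← inv_le_iff_one_le_mul₀' h1r]; exact (hS k hk).le
        have hμk := hμ _ (one_sub_one_div_mem_Ico (Nat.one_le_cast.2 (hn k)))
        have hw := weight_le_pow_mul_of_doubling (fun r hr => (hμ r hr).le) hanti hB hdbl hp
          (by positivity) hek (by linarith [hr.1])
        rw [sub_sub_cancel, ← div_le_iff₀ hμk, div_div_eq_mul_div, div_one,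
          mul_assoc, mul_pow] at hw
        have hx0 : 0 < (1 - r) * n k := by positivity
        calc μ r / μ (1 - 1 / n k) * r ^ (n k - 1)
            ≤ 2 ^ p * ((1 - r) * n k) ^ p * (exp 1 * exp (-(n k * (1 - r)))) :=
              mul_le_mul hw (pow_pred_le_exp_one_mul_exp_neg hr.1.le _) (pow_nonneg hr.1.le _)
                (by positivity)
          _ = 2 ^ p * exp 1 * (((1 - r) * n k) ^ p * exp (-((1 - r) * n k))) := by ring_nf
          _ ≤ 2 ^ p * exp 1 * ((p + 1)! / ((1 - r) * n k)) := by
              gcongr; exact pow_mul_exp_neg_le p hx0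
          _ = 2 ^ p * exp 1 * (p + 1)! * ((1 - r)⁻¹ / n k) := by field_simp
    _ = 2 ^ p * exp 1 * (p + 1)! * ∑ k ∈ S, (1 - r)⁻¹ / n k := Finset.mul_sum ..|>.symm
    _ ≤ 2 ^ p * exp 1 * (p + 1)! * (1 - lam⁻¹)⁻¹ := by
        gcongr; exact sum_div_le_of_gap hlam hn hgap S hS

end WeightedLacunarySum

theorem exists_sum_weight_ratio_mul_pow_le {μ : ℝ → ℝ} (hμ : ∀ r ∈ Ico (0 : ℝ) 1, 0 < μ r)
    (hanti : AntitoneOn μ (Ico 0 1)) {B : ℝ} (hB : 0 < B)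
    (hdbl : ∀ d ∈ Ioo (0 : ℝ) 1, B * μ (1 - d) ≤ μ (1 - d / 2))
    (hgrow : ∀ q : ℝ, 1 < q → ∃ A : ℝ, 1 < A ∧ ∃ y₀ : ℝ, 1 ≤ y₀ ∧
      ∀ x y : ℝ, y₀ < y → q * y < x → A * μ (1 - 1 / x) < μ (1 - 1 / y))
    {lam : ℝ} (hlam : 1 < lam) {n : ℕ → ℕ} (hn : ∀ k, 0 < n k)
    (hgap : ∀ k, lam * n k ≤ n (k + 1)) :
    ∃ M, ∀ r ∈ Ioo (0 : ℝ) 1, ∀ F : Finset ℕ,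
      ∑ k ∈ F, μ r / μ (1 - 1 / n k) * r ^ (n k - 1) ≤ M := by
  obtain ⟨p, hp⟩ := pow_unbounded_of_one_lt B⁻¹ one_lt_two
  obtain ⟨A, hA, y₀, hy₀, hg⟩ := hgrow ((1 + lam) / 2) (by linarith)
  refine ⟨(⌊y₀⌋₊ + 1) + (1 - A⁻¹)⁻¹ + 2 ^ p * exp 1 * (p + 1)! * (1 - lam⁻¹)⁻¹,
    fun r hr F => ?_⟩
  have hr' : r ∈ Ico (0 : ℝ) 1 := Ioo_subset_Ico_self hr
  rw [← F.sum_filter_add_sum_filter_not (fun k => (1 - r)⁻¹ < n k),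
    ← (F.filter fun k => ¬(1 - r)⁻¹ < n k).sum_filter_add_sum_filter_not (fun k => y₀ < n k)]
  have hhigh := sum_weight_ratio_mul_pow_le_of_doubling hμ hanti hB hdbl hp.le hlam hn hgap hr
    (F.filter fun k => (1 - r)⁻¹ < n k) fun k hk => (Finset.mem_filter.1 hk).2
  have hmid := sum_weight_ratio_mul_pow_le_of_growth hμ hanti hlam hgap (by linarith) hA hy₀ hg hr'
    ((F.filter fun k => ¬(1 - r)⁻¹ < n k).filter fun k => y₀ < n k) fun k hk => by
      simp only [Finset.mem_filter, not_lt] at hk; exact ⟨hk.2, hk.1.2⟩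
  have hlow := sum_weight_ratio_mul_pow_le_of_le hμ hanti (strictMono_of_gap hlam hn hgap) hn hr'
    ((F.filter fun k => ¬(1 - r)⁻¹ < n k).filter fun k => ¬y₀ < n k) fun k hk => by
      simp only [Finset.mem_filter, not_lt] at hk; exact ⟨hk.2, hk.1.2⟩
  linarith

lemma sum_mul_pow_le_of_coeff_le {μ : ℝ → ℝ} {n : ℕ → ℕ} {a : ℕ → ℂ} {C M r : ℝ} (hC : 0 ≤ C)
    (hμr : 0 < μ r) (hμn : ∀ k, 0 < μ (1 - 1 / n k))
    (hcoef : ∀ k, n k * ‖a k‖ * μ (1 - 1 / n k) ≤ C)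
    (hM : ∀ F : Finset ℕ, ∑ k ∈ F, μ r / μ (1 - 1 / n k) * r ^ (n k - 1) ≤ M)
    (hr : 0 ≤ r) (F : Finset ℕ) :
    ∑ k ∈ F, n k * ‖a k‖ * r ^ (n k - 1) ≤ C * M / μ r := by
  calc ∑ k ∈ F, n k * ‖a k‖ * r ^ (n k - 1)
      ≤ ∑ k ∈ F, C / μ r * (μ r / μ (1 - 1 / n k) * r ^ (n k - 1)) := by
        refine Finset.sum_le_sum fun k _ => ?_
        rw [← mul_assoc, div_mul_div_cancel₀ hμr.ne']
        gcongr
        rw [le_div_iff₀ (hμn k)]; exact hcoef k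
    _ = C / μ r * ∑ k ∈ F, μ r / μ (1 - 1 / n k) * r ^ (n k - 1) := (Finset.mul_sum ..).symm
    _ ≤ C / μ r * M := by gcongr; exact hM F
    _ = C * M / μ r := by ring

lemma hasDerivAt_tsum_mul_pow {a : ℕ → ℂ} {n : ℕ → ℕ} {R : ℝ}
    (hR : Summable fun k => n k * ‖a k‖ * R ^ (n k - 1)) {z : ℂ} (hz : ‖z‖ < R)
    (hz' : Summable fun k => a k * z ^ n k) :
    HasDerivAt (fun w => ∑' k, a k * w ^ n k) (∑' k, a k * (n k * z ^ (n k - 1))) z := by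
  have hzR : z ∈ Metric.ball (0 : ℂ) R := mem_ball_zero_iff.2 hz
  refine hasDerivAt_tsum_of_isPreconnected hR Metric.isOpen_ball (convex_ball _ _).isPreconnected
    (fun k w _ => (hasDerivAt_pow (n k) w).const_mul (a k)) (fun k w hw => ?_) hzR hz' hzR
  rw [norm_mul, norm_mul, norm_pow, Complex.norm_natCast, ← mul_assoc, mul_comm ‖a k‖]
  gcongr
  exact (mem_ball_zero_iff.1 hw).le

lemma norm_tsum_mul_pow_pred_le {a : ℕ → ℂ} {n : ℕ → ℕ} {z : ℂ}
    (hs : Summable fun k => n k * ‖a k‖ * ‖z‖ ^ (n k - 1)) :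
    ‖∑' k, a k * (n k * z ^ (n k - 1))‖ ≤ ∑' k, n k * ‖a k‖ * ‖z‖ ^ (n k - 1) := by
  have hnorm k : ‖a k * (n k * z ^ (n k - 1))‖ = n k * ‖a k‖ * ‖z‖ ^ (n k - 1) := by
    rw [norm_mul, norm_mul, norm_pow, Complex.norm_natCast]; ring
  rw [← tsum_congr hnorm]
  exact norm_tsum_le_tsum_norm (hs.congr fun k => (hnorm k).symm)

theorem stmt_7_general
    (μ : ℝ → ℝ)
    (hμ_pos : ∀ r ∈ Set.Ico (0:ℝ) 1, 0 < μ r)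
    (hμ_anti : StrictAntiOn μ (Set.Ico (0:ℝ) 1))
    (B : ℝ) (hB : 0 < B)
    (hdbl : ∀ d ∈ Set.Ioo (0:ℝ) 1, B * μ (1 - d) ≤ μ (1 - d/2))
    (hgrow : ∀ q : ℝ, 1 < q → ∃ A : ℝ, 1 < A ∧ ∃ y₀ : ℝ, 1 ≤ y₀ ∧
      ∀ x y : ℝ, y₀ < y → q * y < x → A * μ (1 - 1/x) < μ (1 - 1/y))
    (lam : ℝ) (hlam : 1 < lam)
    (n : ℕ → ℕ) (hn : ∀ k, 0 < n k)
    (hgap : ∀ k, lam * (n k : ℝ) ≤ (n (k+1) : ℝ))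
    (a : ℕ → ℂ)
    (f : ℂ → ℂ)
    (hconv : ∀ z ∈ Metric.ball (0:ℂ) 1, Summable (fun k : ℕ => a k * z ^ (n k)))
    (hf : ∀ z ∈ Metric.ball (0:ℂ) 1, f z = ∑' k : ℕ, a k * z ^ (n k))
    (C : ℝ)
    (hcoef : ∀ k : ℕ, (n k : ℝ) * ‖a k‖ * μ (1 - 1/(n k : ℝ)) ≤ C) :
    ∃ M : ℝ, ∀ z ∈ Metric.ball (0:ℂ) 1,
      μ ‖z‖ * ‖deriv f z‖ ≤ M := by
  obtain ⟨M, hM⟩ := exists_sum_weight_ratio_mul_pow_le hμ_pos hμ_anti.antitoneOn hB hdbl hgrow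
    hlam hn hgap
  have hμn k : 0 < μ (1 - 1 / n k) := hμ_pos _ (one_sub_one_div_mem_Ico (Nat.one_le_cast.2 (hn k)))
  have hC : 0 ≤ C := le_trans (by have := hμn 0; positivity) (hcoef 0)
  have hsum (r : ℝ) (hr : r ∈ Ioo (0 : ℝ) 1) (F : Finset ℕ) :
      ∑ k ∈ F, n k * ‖a k‖ * r ^ (n k - 1) ≤ C * M / μ r :=
    sum_mul_pow_le_of_coeff_le hC (hμ_pos r (Ioo_subset_Ico_self hr)) hμn hcoef (hM r hr) hr.1.le F
  refine ⟨max (C * M) (μ 0 * ‖deriv f 0‖), fun z hz => ?_⟩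
  -- the doubling hypothesis only reaches radii `r` with `1 - r < 1`
  rcases eq_or_ne z 0 with rfl | hz0
  · rw [norm_zero]; exact le_max_right _ _
  have hr : ‖z‖ ∈ Ioo (0 : ℝ) 1 := ⟨norm_pos_iff.2 hz0, mem_ball_zero_iff.1 hz⟩
  have hsummable (r : ℝ) (hr : r ∈ Ioo (0 : ℝ) 1) : Summable fun k => n k * ‖a k‖ * r ^ (n k - 1) :=
    summable_of_sum_le (fun k => by have := hr.1; positivity) (hsum r hr)
  have hderiv : deriv f z = ∑' k, a k * (n k * z ^ (n k - 1)) :=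
    ((hasDerivAt_tsum_mul_pow (hsummable ((‖z‖ + 1) / 2) ⟨by linarith [hr.1], by linarith [hr.2]⟩)
      (by linarith [hr.2]) (hconv z hz)).congr_of_eventuallyEq
      (Filter.eventually_of_mem (Metric.isOpen_ball.mem_nhds hz) hf)).deriv
  have hμz := hμ_pos _ (Ioo_subset_Ico_self hr)
  calc μ ‖z‖ * ‖deriv f z‖ ≤ μ ‖z‖ * ∑' k, n k * ‖a k‖ * ‖z‖ ^ (n k - 1) := by
        rw [hderiv]; gcongr; exact norm_tsum_mul_pow_pred_le (hsummable _ hr)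
    _ ≤ μ ‖z‖ * (C * M / μ ‖z‖) := by
        gcongr; exact Real.tsum_le_of_sum_le (fun k => by positivity) (hsum _ hr)
    _ = C * M := by field_simp [hμz.ne']
    _ ≤ _ := le_max_left _ _

theorem stmt_7
    (μ : ℝ → ℝ)
    (hμ_pos : ∀ r ∈ Set.Ico (0:ℝ) 1, 0 < μ r)
    (hμ_anti : StrictAntiOn μ (Set.Ico (0:ℝ) 1))
    (hμ_cont : ContinuousOn μ (Set.Ico (0:ℝ) 1))
    (hμ_lim : Filter.Tendsto μ (nhdsWithin 1 (Set.Iio (1:ℝ))) (nhds 0))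
    (B : ℝ) (hB : 0 < B)
    (hdbl : ∀ d ∈ Set.Ioo (0:ℝ) 1, B * μ (1 - d) ≤ μ (1 - d/2))
    (hgrow : ∀ q : ℝ, 1 < q → ∃ A : ℝ, 1 < A ∧ ∃ y₀ : ℝ, 1 ≤ y₀ ∧
      ∀ x y : ℝ, y₀ < y → q * y < x → A * μ (1 - 1/x) < μ (1 - 1/y))
    (lam : ℝ) (hlam : 1 < lam)
    (n : ℕ → ℕ) (hn : ∀ k, 0 < n k)
    (hgap : ∀ k, lam * (n k : ℝ) ≤ (n (k+1) : ℝ))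
    (a : ℕ → ℂ)
    (f : ℂ → ℂ)
    (hf_diff : DifferentiableOn ℂ f (Metric.ball (0:ℂ) 1))
    (hconv : ∀ z ∈ Metric.ball (0:ℂ) 1, Summable (fun k : ℕ => a k * z ^ (n k)))
    (hf : ∀ z ∈ Metric.ball (0:ℂ) 1, f z = ∑' k : ℕ, a k * z ^ (n k))
    (C : ℝ)
    (hcoef : ∀ k : ℕ, (n k : ℝ) * ‖a k‖ * μ (1 - 1/(n k : ℝ)) ≤ C) :
    ∃ M : ℝ, ∀ z ∈ Metric.ball (0:ℂ) 1,
      μ ‖z‖ * ‖deriv f z‖ ≤ M :=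
  stmt_7_general μ hμ_pos hμ_anti B hB hdbl hgrow lam hlam n hn hgap a f hconv hf C hcoef
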